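/- Every cosheaf F on a T0 Alexandroff space X admits a projective resolution: there is an exact sequence of cosheaves ⋯ → P_n → P_{n-1} → ⋯ → P_0 → F → 0 (exactness meaning exactness of the induced sequences of costalks at every point) with each P_n a projective cosheaf; moreover such a resolution is unique up to chain homotopy. -/

import Mathlib

open CategoryTheory CategoryTheory.Limits TopologicalSpace


/-- The minimal open set containing `x`. -/
def minOpen {X : Type} [TopologicalSpace X] (x : X) : Set X :=
  ⋂₀ {U : Set X | IsOpen U ∧ x ∈ U}

lemma isOpen_minOpen {X : Type} [TopologicalSpace X] [AlexandrovDiscrete X] (x : X) :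
    IsOpen (minOpen x) :=
  isOpen_sInter fun _ h => h.1

/-- The minimal open set containing `x`, as an element of `Opens X`. -/
def Uo {X : Type} [TopologicalSpace X] [AlexandrovDiscrete X] (x : X) : Opens X :=
  ⟨minOpen x, isOpen_minOpen x⟩

lemma minOpen_le {X : Type} [TopologicalSpace X] {x : X} {U : Opens X} (hx : x ∈ U) :
    minOpen x ⊆ (U : Set X) :=
  Set.sInter_subset_of_mem ⟨U.isOpen, hx⟩

/-- A precosheaf of abelian groups on `X`: a covariant functor on open sets. -/
abbrev Precosheaf (X : Type) [TopologicalSpace X] := Opens X ⥤ AddCommGrpCat.{0}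

variable {X : Type} [TopologicalSpace X]

/-- The nerve of an open cover: the nonempty finite intersections of its members. -/
def nerveSet (𝒰 : Set (Opens X)) : Set (Opens X) :=
  {V | (V : Set X).Nonempty ∧ ∃ s : Finset (Opens X), ↑s ⊆ 𝒰 ∧ s.Nonempty ∧ V = s.inf id}

lemma nerve_le {𝒰 : Set (Opens X)} {U : Opens X} (h : ∀ V ∈ 𝒰, V ≤ U)
    {V : Opens X} (hV : V ∈ nerveSet 𝒰) : V ≤ U := by
  obtain ⟨-, s, hs, ⟨w, hw⟩, rfl⟩ := hV
  exact le_trans (Finset.inf_le hw) (h w (hs hw))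

/-- The diagram of a precosheaf over the nerve of an open cover. -/
def nerveDiagram (F : Precosheaf X) (𝒰 : Set (Opens X)) :
    ObjectProperty.FullSubcategory (C := Opens X) (· ∈ nerveSet 𝒰) ⥤ AddCommGrpCat.{0} :=
  ObjectProperty.ι (C := Opens X) (· ∈ nerveSet 𝒰) ⋙ F

/-- The canonical cocone on the nerve diagram with apex `F(U)`. -/
def coverCocone (F : Precosheaf X) (U : Opens X) (𝒰 : Set (Opens X))
    (h : ∀ V ∈ 𝒰, V ≤ U) : Cocone (nerveDiagram F 𝒰) where
  pt := F.obj U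
  ι :=
    { app := fun V => F.map (homOfLE (nerve_le h V.2))
      naturality := fun a b f => by
        dsimp [nerveDiagram]
        rw [Category.comp_id, ← F.map_comp]
        rfl }

/-- A precosheaf is a cosheaf if for every open `U` and every open cover `𝒰` of `U`, the
canonical map from the colimit over the nerve of `𝒰` to `F(U)` is an isomorphism, i.e.
`F(U)` is the colimit of the nerve diagram. -/
def IsCosheaf (F : Precosheaf X) : Prop :=
  ∀ (U : Opens X) (𝒰 : Set (Opens X)) (h𝒰 : ∀ V ∈ 𝒰, V ≤ U), U ≤ sSup 𝒰 →
    Nonempty (IsColimit (coverCocone F U 𝒰 h𝒰))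

/-- The Alexandroff space `X(P)` of a poset `P`: open sets are the up-sets. -/
def upTop (P : Type) [Preorder P] : TopologicalSpace P where
  IsOpen := IsUpperSet
  isOpen_univ := isUpperSet_univ
  isOpen_inter _ _ := IsUpperSet.inter
  isOpen_sUnion _ h := isUpperSet_sUnion h

variable {P : Type} [PartialOrder P]

/-- The diagram of a cellular cosheaf `F : P ⥤ Ab` over the subposet `U ⊆ P`. -/
def openDiagram (F : P ⥤ AddCommGrpCat.{0}) (U : Set P) :
    ObjectProperty.FullSubcategory (C := P) (· ∈ U) ⥤ AddCommGrpCat.{0} :=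
  ObjectProperty.ι (C := P) (· ∈ U) ⋙ F

noncomputable def hatMap (F : P ⥤ AddCommGrpCat.{0}) {U V : Set P} (h : U ⊆ V) :
    colimit (openDiagram F U) ⟶ colimit (openDiagram F V) :=
  colimit.pre (openDiagram F V) (ObjectProperty.ιOfLE fun _ hx => h hx)

lemma hatMap_ι (F : P ⥤ AddCommGrpCat.{0}) {U V : Set P} (h : U ⊆ V)
    (j : ObjectProperty.FullSubcategory (C := P) (· ∈ U)) :
    colimit.ι (openDiagram F U) j ≫ hatMap F h =
      colimit.ι (openDiagram F V) ⟨j.1, h j.2⟩ := by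
  exact colimit.ι_pre (openDiagram F V) (ObjectProperty.ιOfLE fun _ hx => h hx) j

/-- The cosheaf `F̂` on `X(P)` associated to a cellular cosheaf `F : P ⥤ Ab`,
with `F̂(U) = colim_{x ∈ U} F(x)`. -/
noncomputable def hatF (F : P ⥤ AddCommGrpCat.{0}) :
    @TopologicalSpace.Opens P (upTop P) ⥤ AddCommGrpCat.{0} where
  obj U := colimit (openDiagram F (U : Set P))
  map {U V} h := hatMap F h.le
  map_id U := by
    apply colimit.hom_ext
    intro j
    erw [hatMap_ι]
    simp
  map_comp {U V W} f g := by
    apply colimit.hom_ext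
    intro j
    have hf : (U : Set P) ⊆ V := f.le
    have hg : (V : Set P) ⊆ W := g.le
    have hfg : (U : Set P) ⊆ W := (f ≫ g).le
    exact (hatMap_ι F hfg j).trans
      ((hatMap_ι F hg ⟨j.1, hf j.2⟩).symm.trans
        (by rw [← hatMap_ι F hf j]; exact Category.assoc _ _ _))

section Resolutions
variable {X : Type} [TopologicalSpace X] [AlexandrovDiscrete X]

/-- A cosheaf `Q` is projective if every homomorphism from `Q` to a cosheaf lifts along
every homomorphism of cosheaves which is surjective on costalks. -/
def IsProjectiveCosheaf (Q : Precosheaf X) : Prop :=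
  ∀ (F G : Precosheaf X), IsCosheaf F → IsCosheaf G →
    ∀ (α : Q ⟶ F) (β : G ⟶ F), (∀ x : X, Function.Surjective (β.app (Uo x))) →
      ∃ γ : Q ⟶ G, γ ≫ β = α

/-- A projective resolution `⋯ → P_n → ⋯ → P_0 → F → 0` of a cosheaf `F`:
a complex of projective cosheaves whose sequences of costalks are exact. -/
structure ProjRes (F : Precosheaf X) where
  P : ℕ → Precosheaf X
  d : ∀ n, P (n + 1) ⟶ P n
  ε : P 0 ⟶ F
  cosheaf : ∀ n, IsCosheaf (P n)
  projective : ∀ n, IsProjectiveCosheaf (P n)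
  dd : ∀ n, d (n + 1) ≫ d n = 0
  dε : d 0 ≫ ε = 0
  exact_ε : ∀ x : X, Function.Surjective (ε.app (Uo x))
  exact_0 : ∀ x : X, Function.Exact ((d 0).app (Uo x)) (ε.app (Uo x))
  exact_d : ∀ n, ∀ x : X, Function.Exact ((d (n + 1)).app (Uo x)) ((d n).app (Uo x))

end Resolutions

/-!
A family of sets `T x`, placed at the costalks, generates a free cosheaf: over `U` it is the free
abelian group on the labelled points `(x, t)` with `x ∈ U`, `t : T x`. It is a cosheaf because the
labelled points form a cosheaf of sets and the free abelian group functor is a left adjoint, and it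
is projective because a map out of it is determined by the images of its generators in the
costalks. Covering costalkwise kernels by free cosheaves gives a resolution.

For uniqueness: a projective cosheaf is a retract of a free one, so it lifts along any map whose
costalk images contain those of the map to be lifted. Exactness on costalks supplies exactly this
condition, and the usual inductive comparison argument produces chain maps between any two
resolutions and chain homotopies from their composites to the identities.
-/

theorem exists_dependent_seq_of_step {T : ℕ → Type*} {Q : ∀ n, T n → Prop}
    {R : ∀ n, T n → T (n + 1) → Prop} (t₀ : T 0) (h₀ : Q 0 t₀)
    (step : ∀ n t, Q n t → ∃ t', R n t t' ∧ Q (n + 1) t') :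
    ∃ f : ∀ n, T n, f 0 = t₀ ∧ ∀ n, R n (f n) (f (n + 1)) := by
  choose next hR hQ using step
  let f : ∀ n, {t : T n // Q n t} := fun n =>
    Nat.rec ⟨t₀, h₀⟩ (fun n s => ⟨next n s.1 s.2, hQ n s.1 s.2⟩) n
  exact ⟨fun n => (f n).1, rfl, fun n => hR n _ _⟩

section FreeCosheaf
variable {X : Type} [TopologicalSpace X]

abbrev labelledPoints (T : X → Type) : Opens X ⥤ Type where
  obj U := {p : Σ x, T x // p.1 ∈ U}
  map h := ↾(Subtype.map id fun _ hp => h.le hp)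

noncomputable abbrev FreeCosheaf (T : X → Type) : Precosheaf X :=
  labelledPoints T ⋙ AddCommGrpCat.free

abbrev CoverNerve (𝒰 : Set (Opens X)) :=
  ObjectProperty.FullSubcategory (C := Opens X) (· ∈ nerveSet 𝒰)

lemma inf_mem_nerveSet {𝒰 : Set (Opens X)} {V W : Opens X} (hV : V ∈ nerveSet 𝒰)
    (hW : W ∈ nerveSet 𝒰) (hne : ((V ⊓ W : Opens X) : Set X).Nonempty) :
    V ⊓ W ∈ nerveSet 𝒰 := by
  classical
  obtain ⟨-, s, hs, ⟨a, ha⟩, rfl⟩ := hV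
  obtain ⟨-, t, ht, -, rfl⟩ := hW
  exact ⟨hne, s ∪ t, by simpa using Set.union_subset hs ht, ⟨a, Finset.mem_union_left _ ha⟩,
    Finset.inf_union.symm⟩

lemma exists_mem_coverNerve {𝒰 : Set (Opens X)} {x : X} (hx : x ∈ sSup 𝒰) :
    ∃ V : CoverNerve 𝒰, x ∈ V.obj := by
  obtain ⟨V, hV, hxV⟩ := Opens.mem_sSup.1 hx
  exact ⟨⟨V, ⟨x, hxV⟩, {V}, by simpa using hV, Finset.singleton_nonempty V, by simp⟩, hxV⟩

/-- Any two nerve members containing `p.1` are joined through their intersection. -/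
lemma labelledPoints_cocone_ι_eq {T : X → Type} {𝒰 : Set (Opens X)}
    (s : Cocone (ObjectProperty.ι (· ∈ nerveSet 𝒰) ⋙ labelledPoints T)) {p : Σ x, T x}
    {V W : CoverNerve 𝒰} (hV : p.1 ∈ V.obj) (hW : p.1 ∈ W.obj) :
    s.ι.app V ⟨p, hV⟩ = s.ι.app W ⟨p, hW⟩ := by
  let VW : CoverNerve 𝒰 := ⟨V.obj ⊓ W.obj, inf_mem_nerveSet V.2 W.2 ⟨p.1, hV, hW⟩⟩
  have h : ∀ (V' : CoverNerve 𝒰) (hle : VW.obj ≤ V'.obj) (hV' : p.1 ∈ V'.obj),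
      s.ι.app V' ⟨p, hV'⟩ = s.ι.app VW ⟨p, hV, hW⟩ := fun V' hle _ =>
    ConcreteCategory.congr_hom (s.w (ObjectProperty.homMk (homOfLE hle))) ⟨p, hV, hW⟩
  rw [h V inf_le_left, h W inf_le_right]

def labelledPointsCocone (T : X → Type) (U : Opens X) (𝒰 : Set (Opens X))
    (h𝒰 : ∀ V ∈ 𝒰, V ≤ U) : Cocone (ObjectProperty.ι (· ∈ nerveSet 𝒰) ⋙ labelledPoints T) where
  pt := (labelledPoints T).obj U
  ι := { app V := (labelledPoints T).map (homOfLE (nerve_le h𝒰 V.2)) }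

noncomputable def isColimitLabelledPointsCocone (T : X → Type) (U : Opens X)
    (𝒰 : Set (Opens X)) (h𝒰 : ∀ V ∈ 𝒰, V ≤ U) (hU : U ≤ sSup 𝒰) :
    IsColimit (labelledPointsCocone T U 𝒰 h𝒰) := by
  choose V hV using fun p : (labelledPoints T).obj U => exists_mem_coverNerve (hU p.2)
  exact
  { desc s := ↾fun p => s.ι.app (V p) ⟨p.1, hV p⟩
    fac s W := by
      ext p
      exact labelledPoints_cocone_ι_eq s _ _
    uniq s m hm := by
      ext p
      exact (ConcreteCategory.congr_hom (hm (V p)) ⟨p.1, hV p⟩ :) }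

lemma freeCosheaf_isCosheaf (T : X → Type) : IsCosheaf (FreeCosheaf T) := fun U 𝒰 h𝒰 hU =>
  ⟨isColimitOfPreserves AddCommGrpCat.free (isColimitLabelledPointsCocone T U 𝒰 h𝒰 hU)⟩

namespace FreeCosheaf
variable {T : X → Type}

lemma obj_hom_ext {U : Opens X} {A : AddCommGrpCat} {f g : (FreeCosheaf T).obj U ⟶ A}
    (h : ∀ p, f (FreeAbelianGroup.of p) = g (FreeAbelianGroup.of p)) : f = g :=
  AddCommGrpCat.hom_ext (FreeAbelianGroup.lift_ext _ _ h)

end FreeCosheaf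
end FreeCosheaf

section Lifting
variable {X : Type} [TopologicalSpace X] [AlexandrovDiscrete X]

lemma mem_Uo_self (x : X) : x ∈ Uo x :=
  Set.mem_sInter.2 fun _ hU => hU.2

lemma Uo_le {x : X} {U : Opens X} (hx : x ∈ U) : Uo x ≤ U :=
  minOpen_le hx

namespace FreeCosheaf
variable {T : X → Type} {G : Precosheaf X}

noncomputable def gen (x : X) (t : T x) : (FreeCosheaf T).obj (Uo x) :=
  FreeAbelianGroup.of ⟨⟨x, t⟩, mem_Uo_self x⟩

noncomputable def desc (G : Precosheaf X) (c : ∀ x, T x → G.obj (Uo x)) : FreeCosheaf T ⟶ G where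
  app U := AddCommGrpCat.ofHom <| FreeAbelianGroup.lift fun p : (labelledPoints T).obj U =>
    G.map (homOfLE (Uo_le p.2)) (c p.1.1 p.1.2)
  naturality U V h := obj_hom_ext fun p => by
    change FreeAbelianGroup.lift _ (FreeAbelianGroup.map _ (FreeAbelianGroup.of p)) =
      G.map h (FreeAbelianGroup.lift _ (FreeAbelianGroup.of p))
    rw [FreeAbelianGroup.map_of_apply, FreeAbelianGroup.lift_apply_of,
      FreeAbelianGroup.lift_apply_of, ← ConcreteCategory.comp_apply, ← G.map_comp]
    rfl

lemma desc_app_of (c : ∀ x, T x → G.obj (Uo x)) {U : Opens X} (p : (labelledPoints T).obj U) :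
    (desc G c).app U (FreeAbelianGroup.of p) = G.map (homOfLE (Uo_le p.2)) (c p.1.1 p.1.2) :=
  FreeAbelianGroup.lift_apply_of _ _

lemma desc_gen (c : ∀ x, T x → G.obj (Uo x)) (x : X) (t : T x) :
    (desc G c).app (Uo x) (gen x t) = c x t := by
  rw [gen, desc_app_of, Subsingleton.elim (homOfLE _) (𝟙 (Uo x)), G.map_id]
  rfl

lemma hom_ext {φ ψ : FreeCosheaf T ⟶ G}
    (h : ∀ x t, φ.app (Uo x) (gen x t) = ψ.app (Uo x) (gen x t)) : φ = ψ := by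
  ext U : 2
  refine obj_hom_ext fun ⟨⟨x, t⟩, hx⟩ => ?_
  have hgen : (FreeCosheaf T).map (homOfLE (Uo_le hx)) (gen x t) =
      FreeAbelianGroup.of ⟨⟨x, t⟩, hx⟩ :=
    FreeAbelianGroup.map_of_apply _
  rw [← hgen, ← ConcreteCategory.comp_apply, ← ConcreteCategory.comp_apply, φ.naturality,
    ψ.naturality, ConcreteCategory.comp_apply, ConcreteCategory.comp_apply, h]

noncomputable def cover (G : Precosheaf X) : FreeCosheaf (fun x => G.obj (Uo x)) ⟶ G :=
  desc G fun _ a => a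

lemma cover_surjective (G : Precosheaf X) (x : X) :
    Function.Surjective ((cover G).app (Uo x)) :=
  fun a => ⟨gen x a, desc_gen (G := G) (fun _ a => a) x a⟩

end FreeCosheaf

def CostalkRangeLE {Q B C : Precosheaf X} (α : Q ⟶ B) (δ : C ⟶ B) : Prop :=
  ∀ x : X, Set.range (α.app (Uo x)) ⊆ Set.range (δ.app (Uo x))

def HasCostalkLifts (Q : Precosheaf X) : Prop :=
  ∀ ⦃B C : Precosheaf X⦄ (α : Q ⟶ B) (δ : C ⟶ B), CostalkRangeLE α δ → ∃ γ : Q ⟶ C, γ ≫ δ = α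

lemma costalkRangeLE_of_surjective {Q B C : Precosheaf X} (α : Q ⟶ B) {δ : C ⟶ B}
    (hδ : ∀ x, Function.Surjective (δ.app (Uo x))) : CostalkRangeLE α δ :=
  fun x => by simp [(hδ x).range_eq]

lemma costalkRangeLE_of_exact {Q A B C : Precosheaf X} {α : Q ⟶ B} {δ : C ⟶ B} {δ' : B ⟶ A}
    (hexact : ∀ x, Function.Exact (δ.app (Uo x)) (δ'.app (Uo x))) (hα : α ≫ δ' = 0) :
    CostalkRangeLE α δ := by
  rintro x _ ⟨a, rfl⟩
  refine (hexact x _).1 ?_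
  rw [← ConcreteCategory.comp_apply, ← NatTrans.comp_app, hα]
  rfl

lemma CostalkRangeLE.comp_left {Q Q' B C : Precosheaf X} {α : Q ⟶ B} {δ : C ⟶ B}
    (h : CostalkRangeLE α δ) (r : Q' ⟶ Q) : CostalkRangeLE (r ≫ α) δ := by
  rintro x _ ⟨a, rfl⟩
  exact h x ⟨_, rfl⟩

lemma HasCostalkLifts.of_retract {Q Q' : Precosheaf X} (hQ' : HasCostalkLifts Q') (i : Q ⟶ Q')
    (r : Q' ⟶ Q) (hir : i ≫ r = 𝟙 Q) : HasCostalkLifts Q := by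
  intro B C α δ h
  obtain ⟨γ, hγ⟩ := hQ' (r ≫ α) δ (h.comp_left r)
  exact ⟨i ≫ γ, by rw [Category.assoc, hγ, reassoc_of% hir]⟩

lemma HasCostalkLifts.isProjectiveCosheaf {Q : Precosheaf X} (hQ : HasCostalkLifts Q) :
    IsProjectiveCosheaf Q :=
  fun _ _ _ _ α _ hβ => hQ α _ (costalkRangeLE_of_surjective α hβ)

lemma FreeCosheaf.hasCostalkLifts (T : X → Type) : HasCostalkLifts (FreeCosheaf T) := by
  intro B C α δ h
  choose c hc using fun x (t : T x) => h x ⟨gen x t, rfl⟩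
  refine ⟨desc C c, hom_ext fun x t => ?_⟩
  rw [NatTrans.comp_app, ConcreteCategory.comp_apply, desc_gen, hc]

lemma IsProjectiveCosheaf.hasCostalkLifts {Q : Precosheaf X} (hQ : IsCosheaf Q)
    (hQp : IsProjectiveCosheaf Q) : HasCostalkLifts Q := by
  obtain ⟨s, hs⟩ := hQp Q _ hQ (freeCosheaf_isCosheaf _) (𝟙 Q) (FreeCosheaf.cover Q)
    (FreeCosheaf.cover_surjective Q)
  exact (FreeCosheaf.hasCostalkLifts _).of_retract s _ hs

end Lifting

section Existence
variable {X : Type} [TopologicalSpace X] [AlexandrovDiscrete X]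

namespace FreeCosheaf
variable {G H : Precosheaf X}

noncomputable def kernelCover (δ : G ⟶ H) :
    FreeCosheaf (fun x => {a // δ.app (Uo x) a = 0}) ⟶ G :=
  desc G fun _ a => a.1

lemma kernelCover_comp (δ : G ⟶ H) : kernelCover δ ≫ δ = 0 :=
  hom_ext fun x a => by
    rw [NatTrans.comp_app, ConcreteCategory.comp_apply, kernelCover, desc_gen]
    exact a.2

lemma exact_kernelCover (δ : G ⟶ H) (x : X) :
    Function.Exact ((kernelCover δ).app (Uo x)) (δ.app (Uo x)) := by
  intro a
  refine ⟨fun ha => ⟨gen x ⟨a, ha⟩, desc_gen _ x _⟩, ?_⟩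
  rintro ⟨b, rfl⟩
  rw [← ConcreteCategory.comp_apply, ← NatTrans.comp_app, kernelCover_comp]
  rfl

end FreeCosheaf

/-- Stage `n` is the differential out of `P n`; its target is `P (n - 1)`, or `F` when `n = 0`. -/
noncomputable def freeResolutionStage (F : Precosheaf X) : ℕ → Σ (G H : Precosheaf X), G ⟶ H
  | 0 => ⟨_, _, FreeCosheaf.cover F⟩
  | n + 1 => ⟨_, _, FreeCosheaf.kernelCover (freeResolutionStage F n).2.2⟩

noncomputable def freeResolution (F : Precosheaf X) : ProjRes F where
  P n := (freeResolutionStage F n).1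
  d n := (freeResolutionStage F (n + 1)).2.2
  ε := FreeCosheaf.cover F
  cosheaf
    | 0 => freeCosheaf_isCosheaf _
    | _ + 1 => freeCosheaf_isCosheaf _
  projective
    | 0 => (FreeCosheaf.hasCostalkLifts _).isProjectiveCosheaf
    | _ + 1 => (FreeCosheaf.hasCostalkLifts _).isProjectiveCosheaf
  dd _ := FreeCosheaf.kernelCover_comp _
  dε := FreeCosheaf.kernelCover_comp _
  exact_ε := FreeCosheaf.cover_surjective F
  exact_0 := FreeCosheaf.exact_kernelCover _
  exact_d _ := FreeCosheaf.exact_kernelCover _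

end Existence

section Comparison
variable {X : Type} [TopologicalSpace X] [AlexandrovDiscrete X]
  {A B : ℕ → Precosheaf X} {dA : ∀ n, A (n + 1) ⟶ A n} {dB : ∀ n, B (n + 1) ⟶ B n}

theorem exists_chainMap (hA : ∀ n, dA (n + 1) ≫ dA n = 0)
    (hlift : ∀ n, HasCostalkLifts (A (n + 1)))
    (hB₀ : ∀ x, Function.Surjective ((dB 0).app (Uo x)))
    (hB : ∀ n x, Function.Exact ((dB (n + 1)).app (Uo x)) ((dB n).app (Uo x)))
    (f₀ : A 0 ⟶ B 0) :
    ∃ f : ∀ n, A n ⟶ B n, f 0 = f₀ ∧ ∀ n, f (n + 1) ≫ dB n = dA n ≫ f n := by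
  refine exists_dependent_seq_of_step (Q := fun n f => CostalkRangeLE (dA n ≫ f) (dB n))
    (R := fun n f f' => f' ≫ dB n = dA n ≫ f) f₀
    (costalkRangeLE_of_surjective _ hB₀) fun n f hf => ?_
  obtain ⟨f', hf'⟩ := hlift n (dA n ≫ f) (dB n) hf
  refine ⟨f', hf', costalkRangeLE_of_exact (hB n) ?_⟩
  rw [Category.assoc, hf', reassoc_of% (hA n), zero_comp]

theorem exists_homotopy (hA : ∀ n, dA (n + 1) ≫ dA n = 0)
    (hlift : ∀ n, HasCostalkLifts (A (n + 1)))
    (hB : ∀ n x, Function.Exact ((dB (n + 1)).app (Uo x)) ((dB n).app (Uo x)))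
    {u v : ∀ n, A n ⟶ B n} (hu : ∀ n, u (n + 1) ≫ dB n = dA n ≫ u n)
    (hv : ∀ n, v (n + 1) ≫ dB n = dA n ≫ v n) (h₀ : u 0 = v 0) :
    ∃ h : ∀ n, A n ⟶ B (n + 1), h 0 = 0 ∧
      ∀ n, u (n + 1) - v (n + 1) = h (n + 1) ≫ dB (n + 1) + dA n ≫ h n := by
  refine exists_dependent_seq_of_step (Q := fun n h => dA n ≫ (u n - v n - h ≫ dB n) = 0)
    (R := fun n h h' => u (n + 1) - v (n + 1) = h' ≫ dB (n + 1) + dA n ≫ h) 0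
    (by simp [h₀]) fun n h hh => ?_
  -- `Q n h` is exactly what makes the next correction term land in the kernel of `dB n`.
  have hα : (u (n + 1) - v (n + 1) - dA n ≫ h) ≫ dB n = 0 := by
    simpa [hu, hv] using hh
  obtain ⟨h', hh'⟩ := hlift n _ _ (costalkRangeLE_of_exact (hB n) hα)
  refine ⟨h', by rw [hh']; abel, ?_⟩
  rw [hh', sub_sub_cancel, reassoc_of% (hA n), zero_comp]

end Comparison

namespace ProjRes
variable {X : Type} [TopologicalSpace X] [AlexandrovDiscrete X] {F : Precosheaf X} (R : ProjRes F)

/-- The augmented complex `F ← P 0 ← P 1 ← ⋯`, with `F` in degree `0`. -/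
def augObj : ℕ → Precosheaf X
  | 0 => F
  | n + 1 => R.P n

def augD : ∀ n, R.augObj (n + 1) ⟶ R.augObj n
  | 0 => R.ε
  | n + 1 => R.d n

lemma augD_comp_augD : ∀ n, R.augD (n + 1) ≫ R.augD n = 0
  | 0 => R.dε
  | n + 1 => R.dd n

lemma exact_augD : ∀ n x, Function.Exact ((R.augD (n + 1)).app (Uo x)) ((R.augD n).app (Uo x))
  | 0 => R.exact_0
  | n + 1 => R.exact_d n

lemma hasCostalkLifts_augObj (n : ℕ) : HasCostalkLifts (R.augObj (n + 1)) :=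
  (R.projective n).hasCostalkLifts (R.cosheaf n)

theorem exists_chainMap (S : ProjRes F) :
    ∃ f : ∀ n, R.augObj n ⟶ S.augObj n, f 0 = 𝟙 F ∧ ∀ n, f (n + 1) ≫ S.augD n = R.augD n ≫ f n :=
  _root_.exists_chainMap R.augD_comp_augD R.hasCostalkLifts_augObj S.exact_ε S.exact_augD (𝟙 F)

theorem exists_homotopy_id {u : ∀ n, R.augObj n ⟶ R.augObj n} (hu₀ : u 0 = 𝟙 F)
    (hu : ∀ n, u (n + 1) ≫ R.augD n = R.augD n ≫ u n) :
    ∃ h : ∀ n, R.augObj n ⟶ R.augObj (n + 1), h 0 = 0 ∧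
      ∀ n, u (n + 1) - 𝟙 _ = h (n + 1) ≫ R.augD (n + 1) + R.augD n ≫ h n :=
  _root_.exists_homotopy R.augD_comp_augD R.hasCostalkLifts_augObj R.exact_augD hu
    (v := fun n => 𝟙 _) (by simp) hu₀

end ProjRes

theorem stmt_16_general {X : Type} [TopologicalSpace X] [AlexandrovDiscrete X]
    (F : Precosheaf X) :
    Nonempty (ProjRes F) ∧
      ∀ R S : ProjRes F,
        ∃ (f : ∀ n, R.P n ⟶ S.P n) (g : ∀ n, S.P n ⟶ R.P n)
          (h : ∀ n, R.P n ⟶ R.P (n + 1)) (k : ∀ n, S.P n ⟶ S.P (n + 1)),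
          (∀ n, f (n + 1) ≫ S.d n = R.d n ≫ f n) ∧ f 0 ≫ S.ε = R.ε ∧
          (∀ n, g (n + 1) ≫ R.d n = S.d n ≫ g n) ∧ g 0 ≫ R.ε = S.ε ∧
          f 0 ≫ g 0 - 𝟙 (R.P 0) = h 0 ≫ R.d 0 ∧
          (∀ n, f (n + 1) ≫ g (n + 1) - 𝟙 (R.P (n + 1)) =
            h (n + 1) ≫ R.d (n + 1) + R.d n ≫ h n) ∧
          g 0 ≫ f 0 - 𝟙 (S.P 0) = k 0 ≫ S.d 0 ∧
          (∀ n, g (n + 1) ≫ f (n + 1) - 𝟙 (S.P (n + 1)) =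
            k (n + 1) ≫ S.d (n + 1) + S.d n ≫ k n) := by
  refine ⟨⟨freeResolution F⟩, fun R S => ?_⟩
  obtain ⟨f, hf₀, hf⟩ := R.exists_chainMap S
  obtain ⟨g, hg₀, hg⟩ := S.exists_chainMap R
  obtain ⟨h, hh₀, hh⟩ := R.exists_homotopy_id (u := fun n => f n ≫ g n)
    (by rw [hf₀, hg₀]; exact Category.comp_id _)
    fun n => by simp only [Category.assoc, hg, reassoc_of% (hf n)]
  obtain ⟨k, hk₀, hk⟩ := S.exists_homotopy_id (u := fun n => g n ≫ f n)
    (by rw [hf₀, hg₀]; exact Category.comp_id _)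
    fun n => by simp only [Category.assoc, hf, reassoc_of% (hg n)]
  refine ⟨fun n => f (n + 1), fun n => g (n + 1), fun n => h (n + 1), fun n => k (n + 1),
    fun n => hf (n + 1), (hf 0).trans ?_, fun n => hg (n + 1), (hg 0).trans ?_,
    (hh 0).trans ?_, fun n => hh (n + 1), (hk 0).trans ?_, fun n => hk (n + 1)⟩
  · rw [hf₀]; exact Category.comp_id _
  · rw [hg₀]; exact Category.comp_id _
  · rw [hh₀, comp_zero, add_zero]; rfl
  · rw [hk₀, comp_zero, add_zero]; rfl

/-- Every cosheaf on a `T0` Alexandroff space admits a projective resolution, and any two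
projective resolutions are chain homotopy equivalent. -/
theorem stmt_16 {X : Type} [TopologicalSpace X] [AlexandrovDiscrete X] [T0Space X]
    (F : Precosheaf X) (hF : IsCosheaf F) :
    Nonempty (ProjRes F) ∧
      ∀ R S : ProjRes F,
        ∃ (f : ∀ n, R.P n ⟶ S.P n) (g : ∀ n, S.P n ⟶ R.P n)
          (h : ∀ n, R.P n ⟶ R.P (n + 1)) (k : ∀ n, S.P n ⟶ S.P (n + 1)),
          (∀ n, f (n + 1) ≫ S.d n = R.d n ≫ f n) ∧ f 0 ≫ S.ε = R.ε ∧
          (∀ n, g (n + 1) ≫ R.d n = S.d n ≫ g n) ∧ g 0 ≫ R.ε = S.ε ∧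
          f 0 ≫ g 0 - 𝟙 (R.P 0) = h 0 ≫ R.d 0 ∧
          (∀ n, f (n + 1) ≫ g (n + 1) - 𝟙 (R.P (n + 1)) =
            h (n + 1) ≫ R.d (n + 1) + R.d n ≫ h n) ∧
          g 0 ≫ f 0 - 𝟙 (S.P 0) = k 0 ≫ S.d 0 ∧
          (∀ n, g (n + 1) ≫ f (n + 1) - 𝟙 (S.P (n + 1)) =
            k (n + 1) ≫ S.d (n + 1) + S.d n ≫ k n) :=
  stmt_16_general F
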